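/- arXiv:1902.03038 — 2 statements merged into one kernel-verified Lean document; each statement's English description precedes it below -/
import Mathlib

section
/- Under the assumptions of the reflection lemma (u positive Dirichlet ground state, Ω₁^P ⊂ Ω₂, P = {x = x₀} vertical through (x₀,y₀) ∈ Ω₁), one has the strict inequality ∫_Ω (x - x₀) u(x,y)² dx dy > 0. In particular, writing the integral as the sum over Ω \ (Ω₁ ∪ Ω₁^P), Ω₁, and Ω₁^P, the sum of the last two pieces is nonnegative and the first piece is strictly positive. -/
open MeasureTheory

/-- under the assumptions of the reflection lemma, with `P` the vertical line
`x = x₀`, `Ω₁ = Ω ∩ {x < x₀}`, `Ω₂ = Ω ∩ {x > x₀}`, the mirror image `σ(Ω₁)` strictly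
contained in `Ω₂` (in measure), and `u(p) ≤ u(σ(p))` on `Ω₁` for the positive ground state
eigenfunction `u`, one has the strict inequality `∫_Ω (x - x₀) u(x,y)² dxdy > 0`. -/
theorem statement12
    (Ω : Set (ℝ × ℝ)) (hΩ : IsOpen Ω) (hconv : Convex ℝ Ω) (hΩb : Bornology.IsBounded Ω)
    (x₀ : ℝ)
    (u : ℝ × ℝ → ℝ) (hucont : Continuous u)
    (hpos : ∀ p ∈ Ω, 0 < u p)
    (husupp : Function.support u ⊆ Ω)
    (σ : ℝ × ℝ → ℝ × ℝ) (hσ : σ = fun p => (2 * x₀ - p.1, p.2))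
    (Ω₁ Ω₂ : Set (ℝ × ℝ))
    (hΩ₁ : Ω₁ = Ω ∩ {p : ℝ × ℝ | p.1 < x₀})
    (hΩ₂ : Ω₂ = Ω ∩ {p : ℝ × ℝ | x₀ < p.1})
    (hsub : σ '' Ω₁ ⊆ Ω₂)
    (hstrict : 0 < volume (Ω₂ \ σ '' Ω₁))
    (hineq : ∀ p ∈ Ω₁, u p ≤ u (σ p)) :
    0 < ∫ p in Ω, (p.1 - x₀) * u p ^ 2 := by
  -- basic facts about u
  have huz : ∀ p ∉ Ω, u p = 0 := by
    intro p hp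
    by_contra h
    exact hp (husupp (Function.mem_support.mpr h))
  have hu0 : ∀ p, 0 ≤ u p := by
    intro p
    by_cases h : p ∈ Ω
    · exact (hpos p h).le
    · rw [huz p h]
  -- σ is a continuous involution
  have hinv : ∀ p, σ (σ p) = p := by
    intro p
    simp only [hσ]
    exact Prod.ext (by ring) rfl
  have hσc : Continuous σ := by rw [hσ]; fun_prop
  let e : Homeomorph (ℝ × ℝ) (ℝ × ℝ) :=
    { toFun := σ, invFun := σ, left_inv := hinv, right_inv := hinv,
      continuous_toFun := hσc, continuous_invFun := hσc }
  have hemb : MeasurableEmbedding σ := e.toMeasurableEquiv.measurableEmbedding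
  -- σ is measure preserving
  have hmp : MeasurePreserving σ (volume : Measure (ℝ × ℝ)) volume := by
    rw [hσ]
    have h1 : MeasurePreserving (fun x : ℝ => 2 * x₀ - x) volume volume :=
      Measure.measurePreserving_sub_left volume (2 * x₀)
    exact h1.prod (MeasurePreserving.id (volume : Measure ℝ))
  -- the integrand f and its symmetrization g
    
  set f : ℝ × ℝ → ℝ := fun p => (p.1 - x₀) * u p ^ 2 with hfdef
  set g : ℝ × ℝ → ℝ := fun q => f q + f (σ q) with hgdef
  have hgval : ∀ q, g q = (q.1 - x₀) * (u q ^ 2 - u (σ q) ^ 2) := by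
    intro q
    simp only [hgdef, hfdef, hσ]
    ring
  -- integrability
  have hsuppΩ : IsCompact (closure Ω) :=
    Metric.isCompact_of_isClosed_isBounded isClosed_closure hΩb.closure
  have hcu : HasCompactSupport u :=
    IsCompact.of_isClosed_subset hsuppΩ isClosed_closure (closure_mono husupp)
  have hfc : Continuous f := by
    simp only [hfdef]
    fun_prop
  have hfsupp : Function.support f ⊆ Function.support u := by
    intro p hp
    simp only [hfdef, Function.mem_support] at hp ⊢
    intro h
    apply hp
    rw [h]
    ring
  have hfcs : HasCompactSupport f := hcu.mono hfsupp
  have hfint : Integrable f := hfc.integrable_of_hasCompactSupport hfcs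
  have hfσint : Integrable (fun q => f (σ q)) :=
    (hmp.integrable_comp_emb hemb).mpr hfint
  have hgint : Integrable g := hfint.add hfσint
  -- g is nonnegative
  have hσ1 : ∀ q : ℝ × ℝ, (σ q).1 = 2 * x₀ - q.1 := by intro q; rw [hσ]
  have hgnn : ∀ q, 0 ≤ g q := by
    intro q
    rw [hgval]
    rcases lt_trichotomy q.1 x₀ with h | h | h
    · have hle : u q ≤ u (σ q) := by
        by_cases hq : q ∈ Ω
        · exact hineq q (by rw [hΩ₁]; exact ⟨hq, h⟩)
        · rw [huz q hq]; exact hu0 _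
      have h2 : u q ^ 2 ≤ u (σ q) ^ 2 := pow_le_pow_left₀ (hu0 q) hle 2
      nlinarith [mul_nonneg (by linarith : (0:ℝ) ≤ x₀ - q.1) (by linarith : (0:ℝ) ≤ u (σ q) ^ 2 - u q ^ 2)]
    · rw [h, sub_self, zero_mul]
    · have hle : u (σ q) ≤ u q := by
        by_cases hq : σ q ∈ Ω
        · have h1 : σ q ∈ Ω₁ := by
            rw [hΩ₁]
            refine ⟨hq, ?_⟩
            show (σ q).1 < x₀
            rw [hσ1]; linarith
          have := hineq _ h1
          rwa [hinv] at this
        · rw [huz _ hq]; exact hu0 _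
      have h2 : u (σ q) ^ 2 ≤ u q ^ 2 := pow_le_pow_left₀ (hu0 (σ q)) hle 2
      apply mul_nonneg <;> linarith
  -- the exceptional set has positive measure inside support of g
  have hT : Ω₂ \ σ '' Ω₁ ⊆ Function.support g := by
    intro q hq
    have hq2 : q ∈ Ω₂ := hq.1
    rw [hΩ₂] at hq2
    have hx : x₀ < q.1 := hq2.2
    have hupos : 0 < u q := hpos q hq2.1
    have hσq : σ q ∉ Ω := by
      intro hmem
      apply hq.2
      refine ⟨σ q, ?_, hinv q⟩
      rw [hΩ₁]
      refine ⟨hmem, ?_⟩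
      show (σ q).1 < x₀
      rw [hσ1]; linarith
    have huσ : u (σ q) = 0 := huz _ hσq
    rw [Function.mem_support, hgval, huσ]
    have h2 : (0:ℝ) < u q ^ 2 - 0 ^ 2 := by simpa using pow_pos hupos 2
    exact ne_of_gt (mul_pos (by linarith) h2)
  -- the integral of g is positive
  have hgpos : 0 < ∫ q, g q := by
    rw [integral_pos_iff_support_of_nonneg hgnn hgint]
    exact lt_of_lt_of_le hstrict (measure_mono hT)
  -- relate ∫ g to ∫ f
  have hcomp : ∫ q, f (σ q) = ∫ q, f q := hmp.integral_comp hemb f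
  have hsum : ∫ q, g q = 2 * ∫ q, f q := by
    simp only [hgdef]
    rw [integral_add hfint hfσint, hcomp]
    ring
  -- f vanishes outside Ω
  have hset : ∫ p in Ω, f p = ∫ p, f p := by
    apply setIntegral_eq_integral_of_forall_compl_eq_zero
    intro p hp
    simp only [hfdef, huz p hp]
    ring
  have : 0 < ∫ p, f p := by linarith [hsum ▸ hgpos]
  calc (0:ℝ) < ∫ p, f p := this
    _ = ∫ p in Ω, f p := hset.symm
end

section
/- Suppose for the disk of radius R₀ the eigenvalue with angular momentum m = ⌊R₀²ω/2⌋ and k = 1 satisfies λ ≤ j_{m,1}²/R₀² - mω and j_{m,1} = m + O(m^{1/3}) as m → ∞. Then the ground state eigenvalue of the rotating disk satisfies λ₁^ω ≤ -(R₀²ω²/4)(1 + o(1)) + O(ω^{4/3}) as ω → ∞; in particular λ₁^ω → -∞ as ω → ∞. -/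
open Filter

set_option maxHeartbeats 800000 in
/-- if the ground state eigenvalue `λ₁^ω` of the rotating disk of radius `R₀`
satisfies `λ₁^ω ≤ j_{m,1}²/R₀² - mω` with `m = ⌊R₀²ω/2⌋`, and `j_{m,1} = m + O(m^{1/3})`
as `m → ∞`, then `λ₁^ω ≤ -(R₀²ω²/4) + O(ω^{4/3})` as `ω → ∞`; in particular
`λ₁^ω → -∞` as `ω → ∞`. -/
theorem statement13
    (R₀ : ℝ) (hR₀ : 0 < R₀)
    (j : ℕ → ℝ)
    (hO : ∃ C : ℝ, 0 < C ∧ ∀ m : ℕ, 1 ≤ m → |j m - m| ≤ C * (m : ℝ) ^ ((1 : ℝ) / 3))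
    (lam1 : ℝ → ℝ)
    (hray : ∀ ω : ℝ, 0 < ω →
      lam1 ω ≤ j ⌊R₀ ^ 2 * ω / 2⌋₊ ^ 2 / R₀ ^ 2 - (⌊R₀ ^ 2 * ω / 2⌋₊ : ℝ) * ω) :
    (∃ C : ℝ, 0 < C ∧ ∀ᶠ ω in atTop,
        lam1 ω ≤ -(R₀ ^ 2 * ω ^ 2) / 4 + C * ω ^ ((4 : ℝ) / 3)) ∧
      Tendsto lam1 atTop atBot := by
  obtain ⟨C, hC, hCb⟩ := hO
  have hR2 : (0:ℝ) < R₀ ^ 2 := by positivity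
  set K : ℝ := (R₀ ^ 2 / 2) ^ ((4:ℝ)/3) with hKdef
  have hKpos : 0 < K := Real.rpow_pos_of_pos (by positivity) _
  set C₁ : ℝ := (2 * C + C ^ 2) / R₀ ^ 2 * K + 1 with hC₁def
  have hC₁pos : 0 < C₁ := by positivity
  have key : ∀ᶠ ω in atTop,
      lam1 ω ≤ -(R₀ ^ 2 * ω ^ 2) / 4 + C₁ * ω ^ ((4:ℝ)/3) := by
    filter_upwards [eventually_ge_atTop (max 1 (2 / R₀ ^ 2))] with ω hω
    have hω1 : (1:ℝ) ≤ ω := le_trans (le_max_left _ _) hω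
    have hωpos : (0:ℝ) < ω := by linarith
    have hω2 : (1:ℝ) ≤ R₀ ^ 2 * ω / 2 := by
      have h2 : 2 / R₀ ^ 2 ≤ ω := le_trans (le_max_right _ _) hω
      rw [div_le_iff₀ hR2] at h2
      linarith
    set m : ℕ := ⌊R₀ ^ 2 * ω / 2⌋₊ with hmdef
    have hm1 : 1 ≤ m := Nat.le_floor (by exact_mod_cast hω2)
    have hm1r : (1:ℝ) ≤ (m:ℝ) := by exact_mod_cast hm1
    have hmpos : (0:ℝ) < (m:ℝ) := by linarith
    have hmr : (m:ℝ) ≤ R₀ ^ 2 * ω / 2 := Nat.floor_le (by linarith)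
    have hmr' : R₀ ^ 2 * ω / 2 < (m:ℝ) + 1 := Nat.lt_floor_add_one _
    have hmain : lam1 ω ≤ j m ^ 2 / R₀ ^ 2 - (m:ℝ) * ω := hray ω hωpos
    clear_value m
    -- step A : j m ^ 2 ≤ m^2 + (2C + C²) m^{4/3}
    have habs := hCb m hm1
    have h1 : |j m| ≤ (m:ℝ) + C * (m:ℝ) ^ ((1:ℝ)/3) := by
      have := abs_sub_abs_le_abs_sub (j m) (m:ℝ)
      rw [abs_of_pos hmpos] at this
      linarith
    have e1 : (m:ℝ) * (m:ℝ) ^ ((1:ℝ)/3) = (m:ℝ) ^ ((4:ℝ)/3) := by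
      rw [show (4:ℝ)/3 = 1 + 1/3 by norm_num, Real.rpow_add hmpos, Real.rpow_one]
    have e2 : ((m:ℝ) ^ ((1:ℝ)/3)) ^ 2 = (m:ℝ) ^ ((2:ℝ)/3) := by
      rw [← Real.rpow_natCast ((m:ℝ) ^ ((1:ℝ)/3)) 2, ← Real.rpow_mul hmpos.le]
      norm_num
    have e3 : (m:ℝ) ^ ((2:ℝ)/3) ≤ (m:ℝ) ^ ((4:ℝ)/3) :=
      Real.rpow_le_rpow_of_exponent_le hm1r (by norm_num)
    have hA : j m ^ 2 ≤ (m:ℝ) ^ 2 + (2 * C + C ^ 2) * (m:ℝ) ^ ((4:ℝ)/3) := by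
      have hsq : j m ^ 2 ≤ ((m:ℝ) + C * (m:ℝ) ^ ((1:ℝ)/3)) ^ 2 := by
        rw [← sq_abs]
        exact pow_le_pow_left₀ (abs_nonneg _) h1 2
      have hexp : ((m:ℝ) + C * (m:ℝ) ^ ((1:ℝ)/3)) ^ 2
          = (m:ℝ) ^ 2 + 2 * C * ((m:ℝ) * (m:ℝ) ^ ((1:ℝ)/3))
            + C ^ 2 * ((m:ℝ) ^ ((1:ℝ)/3)) ^ 2 := by ring
      rw [hexp, e1, e2] at hsq
      nlinarith [e3, sq_nonneg C]
    -- step B : m²/R₀² - mω ≤ -(R₀²ω²)/4 + ω/2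
    have hB : (m:ℝ) ^ 2 / R₀ ^ 2 - (m:ℝ) * ω ≤ -(R₀ ^ 2 * ω ^ 2) / 4 + ω / 2 := by
      have hdiv : (m:ℝ) ^ 2 / R₀ ^ 2 ≤ (-(R₀ ^ 2 * ω ^ 2) / 4 + ω / 2) + (m:ℝ) * ω := by
        rw [div_le_iff₀ hR2]
        nlinarith [mul_nonneg (sub_nonneg.mpr hmr)
            (by linarith : (0:ℝ) ≤ 1 - (R₀ ^ 2 * ω / 2 - (m:ℝ))), hω2, hmr, hmr']
      linarith
    -- step C : m^{4/3} ≤ K ω^{4/3}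
    have hCm : (m:ℝ) ^ ((4:ℝ)/3) ≤ K * ω ^ ((4:ℝ)/3) := by
      have hle : (m:ℝ) ≤ R₀ ^ 2 / 2 * ω := by linarith
      calc (m:ℝ) ^ ((4:ℝ)/3) ≤ (R₀ ^ 2 / 2 * ω) ^ ((4:ℝ)/3) :=
            Real.rpow_le_rpow hmpos.le hle (by norm_num)
        _ = K * ω ^ ((4:ℝ)/3) := Real.mul_rpow (by positivity) hωpos.le
    have hωr : ω ≤ ω ^ ((4:ℝ)/3) := by
      calc ω = ω ^ ((1:ℝ)) := (Real.rpow_one ω).symm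
        _ ≤ ω ^ ((4:ℝ)/3) := Real.rpow_le_rpow_of_exponent_le hω1 (by norm_num)
    have hωrpos : (0:ℝ) < ω ^ ((4:ℝ)/3) := Real.rpow_pos_of_pos hωpos _
    have hdivA : j m ^ 2 / R₀ ^ 2
        ≤ (m:ℝ) ^ 2 / R₀ ^ 2 + (2 * C + C ^ 2) / R₀ ^ 2 * (m:ℝ) ^ ((4:ℝ)/3) := by
      calc j m ^ 2 / R₀ ^ 2
          ≤ ((m:ℝ) ^ 2 + (2 * C + C ^ 2) * (m:ℝ) ^ ((4:ℝ)/3)) / R₀ ^ 2 := by gcongr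
        _ = (m:ℝ) ^ 2 / R₀ ^ 2 + (2 * C + C ^ 2) / R₀ ^ 2 * (m:ℝ) ^ ((4:ℝ)/3) := by ring
    have hfrac : (0:ℝ) ≤ (2 * C + C ^ 2) / R₀ ^ 2 := by positivity
    calc lam1 ω ≤ j m ^ 2 / R₀ ^ 2 - (m:ℝ) * ω := hmain
      _ ≤ (m:ℝ) ^ 2 / R₀ ^ 2 + (2 * C + C ^ 2) / R₀ ^ 2 * (m:ℝ) ^ ((4:ℝ)/3)
          - (m:ℝ) * ω := by linarith
      _ ≤ -(R₀ ^ 2 * ω ^ 2) / 4 + ω / 2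
          + (2 * C + C ^ 2) / R₀ ^ 2 * (K * ω ^ ((4:ℝ)/3)) := by
        have := mul_le_mul_of_nonneg_left hCm hfrac
        linarith
      _ ≤ -(R₀ ^ 2 * ω ^ 2) / 4 + C₁ * ω ^ ((4:ℝ)/3) := by
        rw [hC₁def, add_mul, one_mul, ← mul_assoc]
        linarith
  refine ⟨⟨C₁, hC₁pos, key⟩, ?_⟩
  have h2 : ∀ᶠ ω in atTop,
      -(R₀ ^ 2 * ω ^ 2) / 4 + C₁ * ω ^ ((4:ℝ)/3) ≤ -(R₀ ^ 2 / 8) * ω ^ 2 := by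
    have htt : Tendsto (fun ω : ℝ => ω ^ ((2:ℝ)/3)) atTop atTop :=
      tendsto_rpow_atTop (by norm_num)
    filter_upwards [htt.eventually_ge_atTop (8 * C₁ / R₀ ^ 2), eventually_ge_atTop (1:ℝ)]
      with ω h23 hω1
    have hωpos : (0:ℝ) < ω := by linarith
    have hsplit : ω ^ ((2:ℝ)/3) * ω ^ ((4:ℝ)/3) = ω ^ 2 := by
      rw [← Real.rpow_add hωpos]
      norm_num
    have h4pos : (0:ℝ) < ω ^ ((4:ℝ)/3) := Real.rpow_pos_of_pos hωpos _
    have : C₁ * ω ^ ((4:ℝ)/3) ≤ R₀ ^ 2 / 8 * ω ^ 2 := by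
      rw [div_le_iff₀ hR2] at h23
      calc C₁ * ω ^ ((4:ℝ)/3) ≤ (R₀ ^ 2 / 8 * ω ^ ((2:ℝ)/3)) * ω ^ ((4:ℝ)/3) := by
            nlinarith
        _ = R₀ ^ 2 / 8 * ω ^ 2 := by rw [mul_assoc, hsplit]
    linarith
  have hbot : Tendsto (fun ω : ℝ => -(R₀ ^ 2 / 8) * ω ^ 2) atTop atBot := by
    have h1 : Tendsto (fun ω : ℝ => R₀ ^ 2 / 8 * ω ^ 2) atTop atTop :=
      (tendsto_pow_atTop two_ne_zero).const_mul_atTop (by positivity)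
    have h2 := tendsto_neg_atTop_atBot.comp h1
    have heq : (fun ω : ℝ => -(R₀ ^ 2 / 8) * ω ^ 2)
        = Neg.neg ∘ fun ω : ℝ => R₀ ^ 2 / 8 * ω ^ 2 := by
      funext ω; simp [Function.comp, neg_mul]
    rw [heq]; exact h2
  refine tendsto_atBot_mono' atTop ?_ (tendsto_atBot_mono' atTop h2 hbot)
  exact key
end
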